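/- For all α ≤ β in NC^{(ε,ι)}(k), the interval [α, β] := {η ∈ NC^{(ε,ι)}(k) : α ≤ η ≤ β} is order-isomorphic to the product poset Π_{B ∈ ker ι} [α_B, β_B], where [α_B, β_B] is the interval between the restrictions α_B and β_B in the noncrossing partition lattice NC(#B), via the map η ↦ (η_B)_{B ∈ ker ι}. -/

import Mathlib

set_option linter.unusedSectionVars false
set_option linter.deprecated false

open Finset Equiv

namespace LRH

variable {n m : ℕ}

/-- The ε-matrix determined by the interaction sets `K`. -/
def eps (K : Fin m → Finset (Fin n)) (i j : Fin m) : ℕ :=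
  if K i ∩ K j = ∅ then 1 else 0

section Partitions

variable {β : Type*} [LinearOrder β]

/-- A partition (equivalence relation) is (ε,ι)-noncrossing. -/
def EpsNC (K : Fin m → Finset (Fin n)) (ι : β → Fin m) (α : Setoid β) : Prop :=
  ∀ i p j q : β, i < p → p < j → j < q →
    α.r i j → α.r p q → ¬ α.r i p → eps K (ι i) (ι p) = 1

/-- Noncrossing partition of a linearly ordered set. -/
def IsNoncrossing (α : Setoid β) : Prop :=
  ∀ i p j q : β, i < p → p < j → j < q →
    α.r i j → α.r p q → ¬ α.r i p → False

/-- Pair partition: every class has exactly two elements. -/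
def IsPairPartition (α : Setoid β) : Prop :=
  ∀ i : β, {j | α.r i j}.ncard = 2

/-- The set `NC^{(ε,ι)}`. -/
def NCSet (K : Fin m → Finset (Fin n)) (ι : β → Fin m) : Set (Setoid β) :=
  {α | α ≤ Setoid.ker ι ∧ EpsNC K ι α}

/-- The set `NC₂^{(ε,ι)}` of (ε,ι)-noncrossing pair partitions. -/
def NC2Set (K : Fin m → Finset (Fin n)) (ι : β → Fin m) : Set (Setoid β) :=
  {α | IsPairPartition α ∧ α ≤ Setoid.ker ι ∧ EpsNC K ι α}

/-- Restriction of a partition to a subset (as a partition of the subtype). -/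
def restrictSetoid (α : Setoid β) (p : β → Prop) : Setoid {x // p x} :=
  Setoid.comap Subtype.val α

end Partitions

section Perms

variable {β : Type*} [LinearOrder β] [Fintype β]

/-- The full cycle on a finite subset `J`, in increasing order, fixing the complement. -/
def fullCycleOn (J : Finset β) : Equiv.Perm β :=
  (J.sort (· ≤ ·)).formPerm

/-- Number of cycles of a permutation, counting fixed points. -/
def numCycles (σ : Equiv.Perm β) : ℕ :=
  σ.cycleType.card + (Fintype.card β - σ.support.card)

/-- `|σ|`, the minimal number of transpositions needed to write σ; equals
`card − numCycles`. -/
def permNorm (σ : Equiv.Perm β) : ℕ :=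
  σ.support.card - σ.cycleType.card

/-- The permutation induced on `J` (extended by the identity off `J`), when `σ`
preserves `J`; junk value `1` otherwise. -/
def permRestrict (σ : Equiv.Perm β) (J : Finset β) : Equiv.Perm β :=
  if h : ∀ x : β, x ∈ J ↔ σ x ∈ J then Equiv.Perm.ofSubtype (σ.subtypePerm (fun x => (h x).symm)) else 1

/-- `σ` restricted to `J` is noncrossing, i.e. lies on the geodesic `1 - σ_J - γ_J`. -/
def NCOn (σ : Equiv.Perm β) (J : Finset β) : Prop :=
  permNorm (permRestrict σ J) + permNorm ((permRestrict σ J)⁻¹ * fullCycleOn J) = J.card - 1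

/-- `σ_J` and `τ_J` lie on a common geodesic `1 - σ_J - τ_J - γ_J`. -/
def geodesic3 (σ τ : Equiv.Perm β) (J : Finset β) : Prop :=
  permNorm (permRestrict σ J) + permNorm ((permRestrict σ J)⁻¹ * permRestrict τ J)
    + permNorm ((permRestrict τ J)⁻¹ * fullCycleOn J) = J.card - 1

end Perms

variable {k : ℕ}

/-- `J_s = {j : s ∈ K_{ι_j}}`. -/
def Jset (K : Fin m → Finset (Fin n)) (ι : Fin k → Fin m) (s : Fin n) : Finset (Fin k) :=
  Finset.univ.filter (fun j => s ∈ K (ι j))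

/-- The set `S_NC^{(ε,ι)}(γ_k)` of (ε,ι)-noncrossing permutations. -/
def SNCSet (K : Fin m → Finset (Fin n)) (ι : Fin k → Fin m) : Set (Equiv.Perm (Fin k)) :=
  {σ | (∀ j, ι (σ j) = ι j) ∧ ∀ s : Fin n, NCOn σ (Jset K ι s)}

/-- The relation `σ ≤ τ` on `S_NC^{(ε,ι)}(γ_k)`. -/
def geoLe (K : Fin m → Finset (Fin n)) (ι : Fin k → Fin m) (σ τ : Equiv.Perm (Fin k)) : Prop :=
  ∀ s : Fin n, geodesic3 σ τ (Jset K ι s)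

section PMap

variable {β : Type*} [LinearOrder β] [Fintype β]

/-- The equivalence class of `i` as a finset. -/
noncomputable def classFinset (α : Setoid β) (i : β) : Finset β :=
  letI := Classical.decPred (α.r i)
  Finset.univ.filter (α.r i)

lemma mem_classFinset {α : Setoid β} {i j : β} : j ∈ classFinset α i ↔ α.r i j := by
  classical
  simp [classFinset]

lemma self_mem_classFinset (α : Setoid β) (i : β) : i ∈ classFinset α i :=
  mem_classFinset.mpr (α.refl i)

lemma classFinset_eq_of_rel {α : Setoid β} {i j : β} (h : α.r i j) :
    classFinset α i = classFinset α j := by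
  ext x
  simp only [mem_classFinset]
  exact ⟨fun hx => α.trans (α.symm h) hx, fun hx => α.trans h hx⟩

/-- The map `P` from partitions to permutations: each class, listed increasingly,
becomes a cycle. -/
noncomputable def partitionToPerm (α : Setoid β) : Equiv.Perm β :=
  Equiv.ofBijective (fun i => ((classFinset α i).sort (· ≤ ·)).formPerm i) (by
    rw [← Finite.injective_iff_bijective]
    intro a b hab
    dsimp only at hab
    have ha : ((classFinset α a).sort (· ≤ ·)).formPerm a ∈ (classFinset α a).sort (· ≤ ·) :=
      List.formPerm_apply_mem_of_mem ((Finset.mem_sort _).mpr (self_mem_classFinset α a))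
    have hb : ((classFinset α b).sort (· ≤ ·)).formPerm b ∈ (classFinset α b).sort (· ≤ ·) :=
      List.formPerm_apply_mem_of_mem ((Finset.mem_sort _).mpr (self_mem_classFinset α b))
    have ha' : α.r a (((classFinset α a).sort (· ≤ ·)).formPerm a) :=
      mem_classFinset.mp ((Finset.mem_sort _).mp ha)
    have hb' : α.r b (((classFinset α b).sort (· ≤ ·)).formPerm b) :=
      mem_classFinset.mp ((Finset.mem_sort _).mp hb)
    have hrel : α.r a b := by
      refine α.iseqv.trans ha' ?_
      rw [hab]
      exact α.iseqv.symm hb'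
    have hcc : classFinset α a = classFinset α b := classFinset_eq_of_rel hrel
    rw [hcc] at hab
    exact ((classFinset α b).sort (· ≤ ·)).formPerm.injective hab)

end PMap

instance setoidFinite {X : Type*} [Finite X] : Finite (Setoid X) :=
  Finite.of_injective (fun s : Setoid X => s.r) fun a b h => by
    cases a; cases b; dsimp at h; subst h; rfl

section Mobius

/-- The Möbius function of a finite poset, determined by `μ(x,x) = 1` and
`∑_{x ≤ z ≤ y} μ(z,y) = 0` for `x < y`. -/
noncomputable def mobius {P : Type*} [PartialOrder P] [Fintype P] (a b : P) : ℤ :=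
  letI := Classical.dec
  if a = b then 1
  else if a ≤ b then
    - ∑ z ∈ (Finset.univ.filter (fun z => a < z ∧ z ≤ b)).attach,
        mobius (z : P) b
  else 0
termination_by letI := Classical.dec; (Finset.univ.filter (fun z : P => a < z ∧ z ≤ b)).card
decreasing_by
  classical
  have hz := z.2
  simp only [Finset.mem_filter, Finset.mem_univ, true_and] at hz
  apply Finset.card_lt_card
  rw [Finset.ssubset_iff_of_subset]
  · exact ⟨z, by simp [hz.1, hz.2], by simp⟩
  · intro w hw
    simp only [Finset.mem_filter, Finset.mem_univ, true_and] at hw ⊢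
    exact ⟨lt_trans hz.1 hw.1, hw.2⟩

end Mobius

section Restrict

variable {n m k : ℕ}

lemma restrictSetoid_isNoncrossing {K : Fin m → Finset (Fin n)}
    (hK : ∀ i, (K i).Nonempty) {ι : Fin k → Fin m} {α : Setoid (Fin k)}
    (hα : α ∈ NCSet K ι) (v : Fin m) :
    IsNoncrossing (restrictSetoid α (fun j => ι j = v)) := by
  rintro ⟨i, hi⟩ ⟨p, hp⟩ ⟨j, hj⟩ ⟨q, hq⟩ hip hpj hjq hij hpq hnip
  have h1 : i < p := hip
  have h2 : p < j := hpj
  have h3 : j < q := hjq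
  have hij' : α.r i j := hij
  have hpq' : α.r p q := hpq
  have hnip' : ¬ α.r i p := hnip
  have := hα.2 i p j q h1 h2 h3 hij' hpq' hnip'
  rw [hi, hp] at this
  unfold eps at this
  rw [Finset.inter_self] at this
  rcases hK v with ⟨x, hx⟩
  simp only [(Finset.nonempty_iff_ne_empty.mp ⟨x, hx⟩), if_false] at this
  exact absurd this (by simp [Finset.nonempty_iff_ne_empty.mp ⟨x, hx⟩])

end Restrict

end LRH

namespace LRH

variable {n m k : ℕ}

/-- The restriction of an element of `NC^{(ε,ι)}(k)` to the block of ker ι given by the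
fiber of v, as a noncrossing partition of that block. -/
def resBlock {K : Fin m → Finset (Fin n)} (hK : ∀ i, (K i).Nonempty)
    {ι : Fin k → Fin m} (a : {α : Setoid (Fin k) // α ∈ NCSet K ι}) (v : Fin m) :
    {γ : Setoid {j : Fin k // ι j = v} // IsNoncrossing γ} :=
  ⟨restrictSetoid a.val (fun j => ι j = v), restrictSetoid_isNoncrossing hK a.2 v⟩

end LRH

/-!
A partition below `ker ι` is the same thing as a family of partitions of the blocks of `ker ι`:
restricting to the blocks and gluing blocks back together are mutually inverse order isomorphisms.
The `(ε,ι)`-noncrossing condition is not a condition block by block, but it becomes one below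
a fixed `β ∈ NC^{(ε,ι)}(k)`: a crossing of `η ≤ β` between two different blocks of `ker ι` is a
crossing of `β` between different blocks of `β`, hence allowed by `ε`, so only crossings inside
one block of `ker ι` remain, and these are excluded exactly when every `η_B` is noncrossing.
-/

namespace LRH

section Fibers

variable {β γ : Type*} {ι : β → γ}

lemma restrictSetoid_mono {s t : Setoid β} (h : s ≤ t) (p : β → Prop) :
    restrictSetoid s p ≤ restrictSetoid t p :=
  fun _ _ hst => h hst

variable (ι) in
def restrictFibers (s : Setoid β) :
    ∀ v : {v : γ // ∃ j, ι j = v}, Setoid {j : β // ι j = v.val} :=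
  fun v => restrictSetoid s (fun j => ι j = v.val)

/- Quantifying over every fibre that contains `i` and `j` avoids transporting along `ι i = ι j`. -/
def glueFibers (F : ∀ v : {v : γ // ∃ j, ι j = v}, Setoid {j : β // ι j = v.val}) :
    Setoid β where
  r i j := ι i = ι j ∧ ∀ (v : {v : γ // ∃ j, ι j = v}) (hi : ι i = v.val)
      (hj : ι j = v.val), (F v).r ⟨i, hi⟩ ⟨j, hj⟩
  iseqv.refl _ := ⟨rfl, fun v _ _ => (F v).refl _⟩
  iseqv.symm h := ⟨h.1.symm, fun v hi hj => (F v).symm (h.2 v hj hi)⟩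
  iseqv.trans hij hjk := ⟨hij.1.trans hjk.1, fun v hi hk =>
    (F v).trans (hij.2 v hi (hij.1.symm.trans hi)) (hjk.2 v (hij.1.symm.trans hi) hk)⟩

variable {F : ∀ v : {v : γ // ∃ j, ι j = v}, Setoid {j : β // ι j = v.val}}

lemma glueFibers_rel_iff (v : {v : γ // ∃ j, ι j = v}) {i j : β} (hi : ι i = v.val)
    (hj : ι j = v.val) : (glueFibers F).r i j ↔ (F v).r ⟨i, hi⟩ ⟨j, hj⟩ := by
  refine ⟨fun h => h.2 v hi hj, fun h => ⟨hi.trans hj.symm, fun v' hi' hj' => ?_⟩⟩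
  obtain rfl : v' = v := Subtype.ext (hi'.symm.trans hi)
  exact h

lemma glueFibers_le_ker : glueFibers F ≤ Setoid.ker ι :=
  fun _ _ h => Setoid.ker_def.mpr h.1

lemma restrictFibers_glueFibers : restrictFibers ι (glueFibers F) = F :=
  funext fun v => Setoid.ext fun x y => glueFibers_rel_iff v x.2 y.2

lemma glueFibers_restrictFibers {s : Setoid β} (hs : s ≤ Setoid.ker ι) :
    glueFibers (restrictFibers ι s) = s := by
  refine Setoid.ext fun i j => ⟨fun h => h.2 ⟨ι i, i, rfl⟩ rfl h.1.symm, fun h => ?_⟩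
  exact (glueFibers_rel_iff ⟨ι i, i, rfl⟩ rfl (Setoid.ker_def.mp (hs h)).symm).mpr h

variable (ι) in
def fiberOrderIso :
    {s : Setoid β // s ≤ Setoid.ker ι} ≃o
      ∀ v : {v : γ // ∃ j, ι j = v}, Setoid {j : β // ι j = v.val} where
  toFun s := restrictFibers ι s.val
  invFun F := ⟨glueFibers F, glueFibers_le_ker⟩
  left_inv s := Subtype.ext (glueFibers_restrictFibers s.2)
  right_inv _ := restrictFibers_glueFibers
  map_rel_iff' {s t} := by
    refine ⟨fun h i j hij => ?_, fun h v => restrictSetoid_mono h _⟩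
    exact h ⟨ι i, i, rfl⟩ (x := ⟨i, rfl⟩) (y := ⟨j, (Setoid.ker_def.mp (s.2 hij)).symm⟩) hij

end Fibers

variable {n m : ℕ} {K : Fin m → Finset (Fin n)}

lemma glueFibers_mem_NCSet {β : Type*} [LinearOrder β] {ι : β → Fin m}
    {F : ∀ v : {v : Fin m // ∃ j, ι j = v}, Setoid {j : β // ι j = v.val}}
    (hF : ∀ v, IsNoncrossing (F v)) {b : Setoid β} (hb : b ∈ NCSet K ι)
    (hle : glueFibers F ≤ b) : glueFibers F ∈ NCSet K ι := by
  refine ⟨glueFibers_le_ker, fun i p j q hip hpj hjq hij hpq hnip => ?_⟩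
  by_cases hblock : ι i = ι p
  · have hj : ι j = ι i := hij.1.symm
    have hq : ι q = ι i := (hblock.trans hpq.1).symm
    let v : {v : Fin m // ∃ j, ι j = v} := ⟨ι i, i, rfl⟩
    exact (hF v ⟨i, rfl⟩ ⟨p, hblock.symm⟩ ⟨j, hj⟩ ⟨q, hq⟩ hip hpj hjq
      ((glueFibers_rel_iff v rfl hj).mp hij) ((glueFibers_rel_iff v hblock.symm hq).mp hpq)
      fun h => hnip ((glueFibers_rel_iff v rfl hblock.symm).mpr h)).elim
  · exact hb.2 i p j q hip hpj hjq (hle hij) (hle hpq)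
      fun h => hblock (Setoid.ker_def.mp (hb.1 h))

variable {k : ℕ} {ι : Fin k → Fin m}

def intervalOrderIso (hK : ∀ i, (K i).Nonempty) (a b : {α : Setoid (Fin k) // α ∈ NCSet K ι}) :
    Set.Icc a b ≃o
      ∀ v : {v : Fin m // ∃ j, ι j = v}, Set.Icc (resBlock hK a v.val) (resBlock hK b v.val) :=
  let e := fiberOrderIso ι
  let base (c : {α : Setoid (Fin k) // α ∈ NCSet K ι}) : {s // s ≤ Setoid.ker ι} := ⟨c.val, c.2.1⟩
  { toFun η v := ⟨resBlock hK η.val v.val, restrictSetoid_mono η.2.1 _, restrictSetoid_mono η.2.2 _⟩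
    invFun F :=
      have hb : e.symm (fun v => (F v).val.val) ≤ base b := e.symm_apply_le.mpr fun v => (F v).2.2
      ⟨⟨glueFibers fun v => (F v).val.val,
          glueFibers_mem_NCSet (fun v => (F v).val.2) b.2 hb⟩,
        (e.le_symm_apply (x := base a)).mpr fun v => (F v).2.1, hb⟩
    left_inv η :=
      have h := congrArg Subtype.val (e.symm_apply_apply (base η.val))
      Subtype.ext (Subtype.ext h)
    right_inv F := funext fun v => Subtype.ext <| Subtype.ext <|
      congrFun (e.apply_symm_apply fun v => (F v).val.val) v
    map_rel_iff' {η η'} := e.le_iff_le (x := base η) (y := base η') }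

end LRH

open LRH in
theorem statement3_general {n m k : ℕ}
    (K : Fin m → Finset (Fin n)) (hK : ∀ i, (K i).Nonempty) (ι : Fin k → Fin m)
    (a b : {α : Setoid (Fin k) // α ∈ NCSet K ι}) :
    ∃ e : (Set.Icc a b) ≃o
        (∀ v : {v : Fin m // ∃ j, ι j = v},
          Set.Icc (resBlock hK a v.val) (resBlock hK b v.val)),
      ∀ (η : Set.Icc a b) (v : {v : Fin m // ∃ j, ι j = v}),
        ((e η v).val.val : Setoid {j : Fin k // ι j = v.val}) =
          restrictSetoid (η.val.val) (fun j => ι j = v.val) :=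
  ⟨intervalOrderIso hK a b, fun _ _ => rfl⟩

open LRH in
/-- Every interval `[α, β]` in `NC^{(ε,ι)}(k)` is order-isomorphic,
via `η ↦ (η_B)_{B ∈ ker ι}`, to the product of the intervals `[α_B, β_B]` in the
noncrossing partition lattices of the blocks B of ker ι. -/
theorem statement3 {n m k : ℕ} (hn : 1 ≤ n) (hm : 1 ≤ m) (hk : 1 ≤ k)
    (K : Fin m → Finset (Fin n)) (hK : ∀ i, (K i).Nonempty) (ι : Fin k → Fin m)
    (a b : {α : Setoid (Fin k) // α ∈ NCSet K ι}) (hab : a ≤ b) :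
    ∃ e : (Set.Icc a b) ≃o
        (∀ v : {v : Fin m // ∃ j, ι j = v},
          Set.Icc (resBlock hK a v.val) (resBlock hK b v.val)),
      ∀ (η : Set.Icc a b) (v : {v : Fin m // ∃ j, ι j = v}),
        ((e η v).val.val : Setoid {j : Fin k // ι j = v.val}) =
          restrictSetoid (η.val.val) (fun j => ι j = v.val) :=
  statement3_general K hK ι a b
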